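/- arXiv:0910.4441 — 3 statements merged into one kernel-verified Lean document; each statement's English description precedes it below -/
import Mathlib

section
/- Let r ≥ 1 and let M ∈ M_r(𝓕) be a matrix of full rank (det M ≠ 0). Then there exist P, Q ∈ GL_r(R) and a weakly decreasing tuple of real numbers μ_1 ≥ μ_2 ≥ … ≥ μ_r such that P M Q⁻¹ = diag(t^{μ_1}, t^{μ_2}, …, t^{μ_r}). -/
open Matrix HahnSeries

noncomputable section

variable {K : Type*} [Field K] [CharZero K]

/-- Membership in the valuation ring `R = {a ∈ 𝓕 : a = 0 ∨ ‖a‖ ≥ 0}` of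
`𝓕 = HahnSeries ℝ K`. -/
def inR (a : HahnSeries ℝ K) : Prop := a = 0 ∨ 0 ≤ a.order

/-- `M ∈ GL_r(R)`: all entries of `M` lie in `R` and `M` has a two-sided inverse with
entries in `R`. -/
def InGLR {r : ℕ} (M : Matrix (Fin r) (Fin r) (HahnSeries ℝ K)) : Prop :=
  (∀ i j, inR (M i j)) ∧
    ∃ N : Matrix (Fin r) (Fin r) (HahnSeries ℝ K),
      (∀ i j, inR (N i j)) ∧ M * N = 1 ∧ N * M = 1

/-- The diagonal matrix `D_μ = diag(t^{μ_1}, …, t^{μ_r})`. -/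
def Dmat (K : Type*) [Field K] {r : ℕ} (μ : Fin r → ℝ) :
    Matrix (Fin r) (Fin r) (HahnSeries ℝ K) :=
  Matrix.diagonal fun i => HahnSeries.single (μ i) 1

/-- `D_ν̂ = diag(t^{ν_r}, …, t^{ν_1})`. -/
def DmatHat (K : Type*) [Field K] {r : ℕ} (ν : Fin r → ℝ) :
    Matrix (Fin r) (Fin r) (HahnSeries ℝ K) :=
  Dmat K fun i => ν i.rev

/-- `inv(M) = μ`: `μ` is weakly decreasing and `P M Q⁻¹ = D_μ` for some `P, Q ∈ GL_r(R)`. -/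
def IsInv {r : ℕ} (M : Matrix (Fin r) (Fin r) (HahnSeries ℝ K)) (μ : Fin r → ℝ) : Prop :=
  Antitone μ ∧ ∃ P Q : Matrix (Fin r) (Fin r) (HahnSeries ℝ K),
    InGLR P ∧ InGLR Q ∧ P * M * Q⁻¹ = Dmat K μ

/-- `Q` is `μ`-admissible: `Q ∈ GL_r(R)` and `D_μ Q D_μ⁻¹ ∈ GL_r(R)`. -/
def MuAdmissible {r : ℕ} (μ : Fin r → ℝ)
    (Q : Matrix (Fin r) (Fin r) (HahnSeries ℝ K)) : Prop :=
  InGLR Q ∧ InGLR (Dmat K μ * Q * (Dmat K μ)⁻¹)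

/-- `T` is `ν̂`-admissible: `T ∈ GL_r(R)` and `D_ν̂⁻¹ T D_ν̂ ∈ GL_r(R)`. -/
def NuHatAdmissible {r : ℕ} (ν : Fin r → ℝ)
    (T : Matrix (Fin r) (Fin r) (HahnSeries ℝ K)) : Prop :=
  InGLR T ∧ InGLR ((DmatHat K ν)⁻¹ * T * DmatHat K ν)

/-- The minor `W_{IJ}`: the determinant of the `k × k` submatrix of `W` on rows `I` and
columns `J`. -/
def minorDet {r k : ℕ} (W : Matrix (Fin r) (Fin r) (HahnSeries ℝ K))
    (I J : Fin k → Fin r) : HahnSeries ℝ K :=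
  (W.submatrix I J).det

/-- Pair equivalence: `(A, B) = (P M Q⁻¹, Q N T⁻¹)` for some `P, Q, T ∈ GL_r(R)`. -/
def PairEquiv {r : ℕ} (M N A B : Matrix (Fin r) (Fin r) (HahnSeries ℝ K)) : Prop :=
  ∃ P Q T : Matrix (Fin r) (Fin r) (HahnSeries ℝ K),
    InGLR P ∧ InGLR Q ∧ InGLR T ∧ A = P * M * Q⁻¹ ∧ B = Q * N * T⁻¹

/-- `N` is `μ`-generic: full rank, upper triangular, and for all index sets
`I ⊆ H ⊆ J` of equal length the minors `N_{IJ}, N_{HJ}, N_{IH}` are nonzero with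
`‖N_{IJ}‖ ≤ ‖N_{HJ}‖ ≤ ‖N_{IJ}‖ + |μ_I| − |μ_H|` and `‖N_{IJ}‖ ≤ ‖N_{IH}‖`. -/
def MuGeneric {r : ℕ} (μ : Fin r → ℝ)
    (N : Matrix (Fin r) (Fin r) (HahnSeries ℝ K)) : Prop :=
  N.det ≠ 0 ∧ (∀ i j : Fin r, j < i → N i j = 0) ∧
  ∀ (k : ℕ) (I H J : Fin k → Fin r), StrictMono I → StrictMono H → StrictMono J →
    (∀ s, I s ≤ H s) → (∀ s, H s ≤ J s) →
    minorDet N I J ≠ 0 ∧ minorDet N H J ≠ 0 ∧ minorDet N I H ≠ 0 ∧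
    (minorDet N I J).order ≤ (minorDet N H J).order ∧
    (minorDet N H J).order ≤ (minorDet N I J).order + (∑ s, μ (I s)) - ∑ s, μ (H s) ∧
    (minorDet N I J).order ≤ (minorDet N I H).order

/-- `L` is `μ`-`ν̂`-generic: `L ∈ GL_r(R)`, lower triangular, and for all index sets
`I ⊆ H ⊆ J` of equal length the relevant minors are nonzero with
`‖L_{IJ}‖ ≤ ‖L_{HJ}‖ ≤ ‖L_{IJ}‖ + |μ_I| − |μ_H|` and
`‖L_{IJ}‖ ≤ ‖L_{IH}‖ ≤ ‖L_{IJ}‖ + |ν̂_J| − |ν̂_H|`. -/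
def MuNuGeneric {r : ℕ} (μ ν : Fin r → ℝ)
    (L : Matrix (Fin r) (Fin r) (HahnSeries ℝ K)) : Prop :=
  InGLR L ∧ (∀ i j : Fin r, i < j → L i j = 0) ∧
  ∀ (k : ℕ) (I H J : Fin k → Fin r), StrictMono I → StrictMono H → StrictMono J →
    (∀ s, I s ≤ H s) → (∀ s, H s ≤ J s) →
    minorDet L I J ≠ 0 ∧ minorDet L H J ≠ 0 ∧ minorDet L I H ≠ 0 ∧
    (minorDet L I J).order ≤ (minorDet L H J).order ∧
    (minorDet L H J).order ≤ (minorDet L I J).order + (∑ s, μ (I s)) - (∑ s, μ (H s)) ∧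
    (minorDet L I J).order ≤ (minorDet L I H).order ∧
    (minorDet L I H).order ≤
      (minorDet L I J).order + (∑ s, ν ((J s).rev)) - ∑ s, ν ((H s).rev)

/-- The rightmost `k` columns `(r−k+1, …, r)` of an `r × r` matrix, as a map
`Fin k → Fin r`. -/
def lastCols (r k : ℕ) (h : k ≤ r) : Fin k → Fin r :=
  fun i => ⟨r - k + i.val, by have := i.isLt; omega⟩

/-- The set of (0-based) rows of an `r × r` matrix that remain after omitting the rows
with 1-based index in the interval `[p, q]`. -/
def keptRows (r p q : ℕ) : Finset (Fin r) :=
  (Finset.univ.filter fun x : Fin r => p ≤ x.val + 1 ∧ x.val + 1 ≤ q)ᶜ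

lemma keptRows_card_le (r p q : ℕ) : (keptRows r p q).card ≤ r := by
  simpa using (keptRows r p q).card_le_univ

/-- `‖((p)^∧, …, (q)^∧)‖` for the matrix `N`: the order of the minor of `N` on the rows
`{1, …, r} ∖ {p, …, q}` (1-based) and the rightmost columns; when `p > q` no row is
omitted and this is `‖det N‖`. -/
def hatOrd {r : ℕ} (N : Matrix (Fin r) (Fin r) (HahnSeries ℝ K)) (p q : ℕ) : ℝ :=
  (minorDet N (fun i => ((keptRows r p q).orderIsoOfFin rfl i).1)
    (lastCols r (keptRows r p q).card (keptRows_card_le r p q))).order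

/-- `k` is the right filling of a pair `(M, N)` with `inv(M) = μ`: there is a
`μ`-generic matrix `N*` with `(D_μ, N*)` pair-equivalent to `(M, N)` such that `k`
satisfies the determinantal formula
`k_{1j} + ⋯ + k_{ij} = ‖((j−i)^∧, …, (j−1)^∧)‖ − ‖((j−i+1)^∧, …, (j)^∧)‖`
(all indices written 1-based). -/
def RightFillingOf {r : ℕ} (μ : Fin r → ℝ)
    (M N : Matrix (Fin r) (Fin r) (HahnSeries ℝ K))
    (k : Fin r → Fin r → ℝ) : Prop :=
  ∃ Nstar : Matrix (Fin r) (Fin r) (HahnSeries ℝ K),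
    MuGeneric μ Nstar ∧ PairEquiv M N (Dmat K μ) Nstar ∧
    ∀ i j : Fin r, i ≤ j →
      ∑ s ∈ Finset.Iic i, k s j =
        hatOrd Nstar (j.val - i.val) j.val - hatOrd Nstar (j.val - i.val + 1) (j.val + 1)

/-- The left filling of `(M, N)` is the right filling of the transposed pair
`(Nᵀ, Mᵀ)`. -/
def LeftFillingOf {r : ℕ} (ν : Fin r → ℝ)
    (M N : Matrix (Fin r) (Fin r) (HahnSeries ℝ K))
    (m : Fin r → Fin r → ℝ) : Prop :=
  RightFillingOf ν Nᵀ Mᵀ m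

/-- `{k_ij : 1 ≤ i ≤ j ≤ r}` (indexed 0-based here) is an `L𝕉` filling of type
`(μ, ν; λ)`: the conditions (LR1)–(LR4). -/
def IsLRFilling {r : ℕ} (μ ν lam : Fin r → ℝ) (k : Fin r → Fin r → ℝ) : Prop :=
  (∀ j : Fin r, μ j + ∑ s ∈ Finset.Iic j, k s j = lam j) ∧
  (∀ i : Fin r, ∑ s ∈ Finset.Ici i, k i s = ν i) ∧
  (∀ i j : Fin r, i < j → 0 ≤ k i j) ∧
  (∀ (i j : ℕ) (hi : i < r) (hj : j < r), i ≤ j → 1 ≤ j →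
    μ ⟨j, hj⟩ + ∑ s ∈ Finset.Iic (⟨i, hi⟩ : Fin r), k s ⟨j, hj⟩ ≤
      μ ⟨j - 1, by omega⟩ + ∑ s ∈ Finset.Iio (⟨i, hi⟩ : Fin r), k s ⟨j - 1, by omega⟩) ∧
  (∀ (i j : ℕ) (hij : i ≤ j) (hj : j + 1 < r),
    ∑ s ∈ Finset.Icc (⟨i + 1, by omega⟩ : Fin r) ⟨j + 1, hj⟩, k ⟨i + 1, by omega⟩ s ≤
      ∑ s ∈ Finset.Icc (⟨i, by omega⟩ : Fin r) ⟨j, by omega⟩, k ⟨i, by omega⟩ s)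

/-!
`R` is a valuation ring, so Gaussian elimination works over it as soon as every pivot is an
entry of least valuation: the multipliers `-m_{ik} / m_{kk}` of the elementary operations then
lie in `R`. A matrix with entries in `R` whose determinant has valuation `0` lies in `GL_r(R)`,
since its inverse is the adjugate divided by the determinant. Repeated elimination makes
`M` diagonal, every nonzero diagonal entry `d` is `t^{‖d‖}` times a unit of `R`, and a permutation
sorts the exponents.
-/

namespace HahnSeries

variable {Γ F : Type*} [AddCommGroup Γ] [LinearOrder Γ] [IsOrderedAddMonoid Γ] [Field F]

variable (Γ F) in
def integers : Subring (HahnSeries Γ F) where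
  carrier := {x | 0 ≤ addVal Γ F x}
  mul_mem' {x y} (hx : 0 ≤ addVal Γ F x) (hy : 0 ≤ addVal Γ F y) :=
    show 0 ≤ addVal Γ F (x * y) by rw [AddValuation.map_mul]; exact add_nonneg hx hy
  one_mem' := by simp
  add_mem' {x y} (hx : 0 ≤ addVal Γ F x) (hy : 0 ≤ addVal Γ F y) :=
    (le_min hx hy).trans (AddValuation.map_add _ x y)
  zero_mem' := by simp
  neg_mem' {x} (hx : 0 ≤ addVal Γ F x) := show 0 ≤ addVal Γ F (-x) by rwa [AddValuation.map_neg]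

theorem mem_integers {x : HahnSeries Γ F} : x ∈ integers Γ F ↔ 0 ≤ addVal Γ F x := Iff.rfl

theorem div_mem_integers {x y : HahnSeries Γ F} (h : addVal Γ F y ≤ addVal Γ F x) :
    x / y ∈ integers Γ F := by
  rcases eq_or_ne y 0 with rfl | hy
  · simp
  have hy' : addVal Γ F y ≠ ⊤ := by simpa [addVal_apply] using hy
  rw [mem_integers, AddValuation.map_div,
    ← (LinearOrderedAddCommGroupWithTop.sub_self_eq_zero_iff_ne_top).2 hy']
  exact (LinearOrderedAddCommGroupWithTop.sub_le_sub_iff_left_of_ne_top hy').2 h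

theorem addVal_div_eq_zero {x y : HahnSeries Γ F} (hy : y ≠ 0)
    (h : addVal Γ F x = addVal Γ F y) : addVal Γ F (x / y) = 0 := by
  have hy' : addVal Γ F y ≠ ⊤ := by simpa [addVal_apply] using hy
  rw [AddValuation.map_div, h, LinearOrderedAddCommGroupWithTop.sub_self_eq_zero_iff_ne_top.2 hy']

end HahnSeries

section

variable {Γ F : Type*} [AddCommGroup Γ] [LinearOrder Γ] [IsOrderedAddMonoid Γ] [Field F]
  {ι κ : Type*} [Fintype ι] [DecidableEq ι] [Fintype κ] [DecidableEq κ]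

theorem det_mem_integers {M : Matrix ι ι (HahnSeries Γ F)} (h : ∀ i j, M i j ∈ integers Γ F) :
    M.det ∈ integers Γ F := by
  have hM : M = (integers Γ F).subtype.mapMatrix (of fun i j => ⟨M i j, h i j⟩) := rfl
  rw [hM, ← RingHom.map_det]
  exact Subtype.prop _

variable (Γ F ι) in
def integralGL : Submonoid (Matrix ι ι (HahnSeries Γ F)) where
  carrier := {M | (∀ i j, M i j ∈ integers Γ F) ∧ addVal Γ F M.det = 0}
  mul_mem' {M N} hM hN := by
    refine ⟨fun i j => ?_, ?_⟩
    · rw [mul_apply]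
      exact Subring.sum_mem _ fun k _ => Subring.mul_mem _ (hM.1 i k) (hN.1 k j)
    · rw [det_mul, AddValuation.map_mul, hM.2, hN.2, add_zero]
  one_mem' := by
    refine ⟨fun i j => ?_, by simp⟩
    rw [one_apply]
    split_ifs
    exacts [Subring.one_mem _, Subring.zero_mem _]

theorem det_ne_zero_of_mem_integralGL {M : Matrix ι ι (HahnSeries Γ F)}
    (hM : M ∈ integralGL Γ F ι) : M.det ≠ 0 := by
  intro h
  simpa [h] using hM.2

theorem inv_mem_integralGL {M : Matrix ι ι (HahnSeries Γ F)} (hM : M ∈ integralGL Γ F ι) :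
    M⁻¹ ∈ integralGL Γ F ι := by
  have hdet : (M.det)⁻¹ ∈ integers Γ F := by
    rw [mem_integers, AddValuation.map_inv, hM.2, neg_zero]
  refine ⟨fun i j => ?_, ?_⟩
  · rw [Matrix.inv_def, Ring.inverse_eq_inv', Matrix.smul_apply, smul_eq_mul, adjugate_apply]
    refine Subring.mul_mem _ hdet (det_mem_integers fun k l => ?_)
    rw [updateRow_apply]
    split_ifs
    · rw [Pi.single_apply]
      split_ifs
      exacts [Subring.one_mem _, Subring.zero_mem _]
    · exact hM.1 k l
  · rw [det_nonsing_inv, Ring.inverse_eq_inv', AddValuation.map_inv, hM.2, neg_zero]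

theorem permMatrix_mem_integralGL (σ : Equiv.Perm ι) :
    σ.permMatrix (HahnSeries Γ F) ∈ integralGL Γ F ι := by
  refine ⟨fun i j => ?_, ?_⟩
  · rw [Equiv.Perm.permMatrix, PEquiv.toMatrix_apply]
    split_ifs
    exacts [Subring.one_mem _, Subring.zero_mem _]
  · rw [det_permutation]
    rcases Int.units_eq_one_or (Equiv.Perm.sign σ) with h | h <;> simp [h]

theorem transvection_mem_integralGL {i j : ι} (hij : i ≠ j) {c : HahnSeries Γ F}
    (hc : c ∈ integers Γ F) : transvection i j c ∈ integralGL Γ F ι := by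
  refine ⟨fun k l => ?_, by simp [det_transvection_of_ne _ _ hij]⟩
  rw [transvection, Matrix.add_apply, one_apply, single_apply]
  refine Subring.add_mem _ ?_ ?_ <;> split_ifs
  exacts [Subring.one_mem _, Subring.zero_mem _, hc, Subring.zero_mem _]

theorem diagonal_mem_integralGL {d : ι → HahnSeries Γ F} (hd : ∀ i, addVal Γ F (d i) = 0) :
    diagonal d ∈ integralGL Γ F ι := by
  refine ⟨fun i j => ?_, ?_⟩
  · rw [diagonal_apply]
    split_ifs
    exacts [(hd i).symm.le, Subring.zero_mem _]
  · rw [det_diagonal]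
    exact Finset.prod_induction _ (fun x => addVal Γ F x = 0)
      (fun a b ha hb => by rw [AddValuation.map_mul, ha, hb, add_zero])
      (AddValuation.map_one _) fun i _ => hd i

theorem reindex_mem_integralGL (e : ι ≃ κ) {M : Matrix ι ι (HahnSeries Γ F)}
    (hM : M ∈ integralGL Γ F ι) : reindex e e M ∈ integralGL Γ F κ :=
  ⟨fun i j => hM.1 _ _, by rw [det_reindex_self, hM.2]⟩

theorem fromBlocks_one_mem_integralGL {P : Matrix ι ι (HahnSeries Γ F)}
    (hP : P ∈ integralGL Γ F ι) :
    fromBlocks P 0 0 (1 : Matrix κ κ (HahnSeries Γ F)) ∈ integralGL Γ F (ι ⊕ κ) := by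
  refine ⟨?_, by rw [det_fromBlocks_zero₂₁, det_one, mul_one, hP.2]⟩
  rintro (i | i) (j | j)
  · exact hP.1 i j
  · exact Subring.zero_mem _
  · exact Subring.zero_mem _
  · exact (integralGL Γ F κ).one_mem.1 i j

def IntegralEquiv (M N : Matrix ι ι (HahnSeries Γ F)) : Prop :=
  ∃ P ∈ integralGL Γ F ι, ∃ Q ∈ integralGL Γ F ι, P * M * Q = N

namespace IntegralEquiv

theorem of_eq {M N : Matrix ι ι (HahnSeries Γ F)} (h : M = N) : IntegralEquiv M N :=
  ⟨1, one_mem _, 1, one_mem _, by simp [h]⟩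

theorem trans {M N L : Matrix ι ι (HahnSeries Γ F)} (hMN : IntegralEquiv M N)
    (hNL : IntegralEquiv N L) : IntegralEquiv M L := by
  obtain ⟨P, hP, Q, hQ, rfl⟩ := hMN
  obtain ⟨P', hP', Q', hQ', rfl⟩ := hNL
  exact ⟨P' * P, mul_mem hP' hP, Q * Q', mul_mem hQ hQ', by simp only [Matrix.mul_assoc]⟩

theorem det_ne_zero {M N : Matrix ι ι (HahnSeries Γ F)} (h : IntegralEquiv M N)
    (hM : M.det ≠ 0) : N.det ≠ 0 := by
  obtain ⟨P, hP, Q, hQ, rfl⟩ := h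
  simp only [det_mul]
  exact mul_ne_zero (mul_ne_zero (det_ne_zero_of_mem_integralGL hP) hM)
    (det_ne_zero_of_mem_integralGL hQ)

theorem reindex {M N : Matrix ι ι (HahnSeries Γ F)} (h : IntegralEquiv M N) (e : ι ≃ κ) :
    IntegralEquiv (Matrix.reindex e e M) (Matrix.reindex e e N) := by
  obtain ⟨P, hP, Q, hQ, rfl⟩ := h
  refine ⟨Matrix.reindex e e P, reindex_mem_integralGL e hP, Matrix.reindex e e Q,
    reindex_mem_integralGL e hQ, ?_⟩
  simp only [reindex_apply, submatrix_mul_equiv]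

theorem fromBlocks_zero {A A' : Matrix ι ι (HahnSeries Γ F)} (h : IntegralEquiv A A')
    (D : Matrix κ κ (HahnSeries Γ F)) :
    IntegralEquiv (fromBlocks A 0 0 D) (fromBlocks A' 0 0 D) := by
  obtain ⟨P, hP, Q, hQ, rfl⟩ := h
  refine ⟨fromBlocks P 0 0 1, fromBlocks_one_mem_integralGL hP, fromBlocks Q 0 0 1,
    fromBlocks_one_mem_integralGL hQ, ?_⟩
  simp [fromBlocks_multiply]

end IntegralEquiv

theorem integralEquiv_submatrix (M : Matrix ι ι (HahnSeries Γ F)) (σ τ : Equiv.Perm ι) :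
    IntegralEquiv M (M.submatrix σ τ) :=
  ⟨_, permMatrix_mem_integralGL σ, _, permMatrix_mem_integralGL τ.symm, by
    rw [PEquiv.toMatrix_toPEquiv_mul, PEquiv.mul_toMatrix_toPEquiv, submatrix_submatrix,
      Equiv.symm_symm]
    rfl⟩

theorem integralEquiv_diagonal_of_addVal_eq {d d' : ι → HahnSeries Γ F} (hd : ∀ i, d i ≠ 0)
    (h : ∀ i, addVal Γ F (d' i) = addVal Γ F (d i)) : IntegralEquiv (diagonal d) (diagonal d') :=
  ⟨diagonal fun i => d' i / d i, diagonal_mem_integralGL fun i => addVal_div_eq_zero (hd i) (h i),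
    1, one_mem _, by simp [diagonal_mul_diagonal, hd]⟩

theorem exists_integralEquiv_minimal_at (M : Matrix ι ι (HahnSeries Γ F)) (k : ι) :
    ∃ N, IntegralEquiv M N ∧ ∀ i j, addVal Γ F (N k k) ≤ addVal Γ F (N i j) := by
  have : Nonempty ι := ⟨k⟩
  obtain ⟨⟨a, b⟩, hmin⟩ := Finite.exists_min fun p : ι × ι => addVal Γ F (M p.1 p.2)
  refine ⟨M.submatrix (Equiv.swap a k) (Equiv.swap b k), integralEquiv_submatrix M _ _,
    fun i j => ?_⟩
  simpa only [submatrix_apply, Equiv.swap_apply_right] using hmin (_, _)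

open Pivot in
theorem exists_integralEquiv_fromBlocks_of_minimal {r : ℕ}
    (M : Matrix (Fin r ⊕ Unit) (Fin r ⊕ Unit) (HahnSeries Γ F))
    (hM : M (.inr ()) (.inr ()) ≠ 0)
    (hmin : ∀ i j, addVal Γ F (M (.inr ()) (.inr ())) ≤ addVal Γ F (M i j)) :
    ∃ A D, IntegralEquiv M (fromBlocks A 0 0 D) := by
  have hc : ∀ i j, -M i j / M (.inr ()) (.inr ()) ∈ integers Γ F := fun i j =>
    div_mem_integers (by rw [AddValuation.map_neg]; exact hmin i j)
  have hcol : (listTransvecCol M).prod ∈ integralGL Γ F _ :=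
    Submonoid.list_prod_mem _ fun T hT => by
      obtain ⟨i, rfl⟩ := List.mem_ofFn.1 hT
      exact transvection_mem_integralGL (by simp) (hc _ _)
  have hrow : (listTransvecRow M).prod ∈ integralGL Γ F _ :=
    Submonoid.list_prod_mem _ fun T hT => by
      obtain ⟨i, rfl⟩ := List.mem_ofFn.1 hT
      exact transvection_mem_integralGL (by simp) (hc _ _)
  set N := (listTransvecCol M).prod * M * (listTransvecRow M).prod
  obtain ⟨h₁₂, h₂₁⟩ := isTwoBlockDiagonal_listTransvecCol_mul_mul_listTransvecRow M hM
  refine ⟨N.toBlocks₁₁, N.toBlocks₂₂, _, hcol, _, hrow, ?_⟩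
  rw [← h₁₂, ← h₂₁, fromBlocks_toBlocks]

theorem exists_integralEquiv_diagonal_of_sum_unit {r : ℕ}
    (ih : ∀ A : Matrix (Fin r) (Fin r) (HahnSeries Γ F), ∃ d, IntegralEquiv A (diagonal d))
    (M : Matrix (Fin r ⊕ Unit) (Fin r ⊕ Unit) (HahnSeries Γ F)) :
    ∃ d, IntegralEquiv M (diagonal d) := by
  obtain ⟨N, hMN, hmin⟩ := exists_integralEquiv_minimal_at M (.inr ())
  by_cases hN : N (.inr ()) (.inr ()) = 0
  · have hN0 : N = 0 := Matrix.ext fun i j => by simpa [hN, addVal_apply] using hmin i j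
    exact ⟨fun _ => 0, by rwa [diagonal_zero, ← hN0]⟩
  obtain ⟨A, D, hND⟩ := exists_integralEquiv_fromBlocks_of_minimal N hN hmin
  obtain ⟨d, hA⟩ := ih A
  have hD : D = diagonal fun _ => D () () := by
    ext ⟨⟩ ⟨⟩
    rfl
  refine ⟨Sum.elim d fun _ => D () (), hMN.trans (hND.trans ?_)⟩
  rw [← fromBlocks_diagonal, ← hD]
  exact hA.fromBlocks_zero D

theorem exists_integralEquiv_diagonal :
    ∀ {n : ℕ} (M : Matrix (Fin n) (Fin n) (HahnSeries Γ F)), ∃ d, IntegralEquiv M (diagonal d)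
  | 0, M => ⟨0, .of_eq (Subsingleton.elim _ _)⟩
  | n + 1, M => by
    let e : Fin (n + 1) ≃ Fin n ⊕ Unit := Fintype.equivOfCardEq (by simp)
    obtain ⟨d, h⟩ :=
      exists_integralEquiv_diagonal_of_sum_unit exists_integralEquiv_diagonal (reindex e e M)
    refine ⟨d ∘ e, ?_⟩
    simpa [reindex_apply, submatrix_diagonal_equiv] using h.reindex e.symm

theorem exists_integralEquiv_diagonal_single_antitone {n : ℕ}
    (M : Matrix (Fin n) (Fin n) (HahnSeries Γ F)) (hM : M.det ≠ 0) :
    ∃ μ : Fin n → Γ, Antitone μ ∧ IntegralEquiv M (diagonal fun i => single (μ i) 1) := by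
  obtain ⟨d, hd⟩ := exists_integralEquiv_diagonal M
  have hd0 : ∀ i, d i ≠ 0 := by
    have hdet := hd.det_ne_zero hM
    rw [det_diagonal, Finset.prod_ne_zero_iff] at hdet
    exact fun i => hdet i (Finset.mem_univ i)
  let ν : Fin n → Γ := fun i => (d i).order
  let σ := Tuple.sort (OrderDual.toDual ∘ ν)
  refine ⟨ν ∘ σ, monotone_toDual_comp_iff.1 (Tuple.monotone_sort (OrderDual.toDual ∘ ν)), ?_⟩
  have hsingle : IntegralEquiv (diagonal d) (diagonal fun i => single (ν i) (1 : F)) :=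
    integralEquiv_diagonal_of_addVal_eq hd0 fun i => by simp [ν, hd0 i]
  have hsort := integralEquiv_submatrix (diagonal fun i => single (ν i) (1 : F)) σ σ
  rw [submatrix_diagonal_equiv] at hsort
  exact hd.trans (hsingle.trans hsort)

theorem inR_iff_mem_integers {x : HahnSeries ℝ F} : inR x ↔ x ∈ integers ℝ F := by
  rcases eq_or_ne x 0 with rfl | hx
  · simp [inR]
  · simp [inR, mem_integers, hx]

theorem inGLR_of_mem_integralGL {r : ℕ} {M : Matrix (Fin r) (Fin r) (HahnSeries ℝ F)}
    (hM : M ∈ integralGL ℝ F (Fin r)) : InGLR M := by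
  have hdet : IsUnit M.det := isUnit_iff_ne_zero.2 (det_ne_zero_of_mem_integralGL hM)
  exact ⟨fun i j => inR_iff_mem_integers.2 (hM.1 i j), M⁻¹,
    fun i j => inR_iff_mem_integers.2 ((inv_mem_integralGL hM).1 i j),
    mul_nonsing_inv M hdet, nonsing_inv_mul M hdet⟩

end

theorem invariant_partition_exists_general {r : ℕ}
    (M : Matrix (Fin r) (Fin r) (HahnSeries ℝ K)) (hM : M.det ≠ 0) :
    ∃ (P Q : Matrix (Fin r) (Fin r) (HahnSeries ℝ K)) (μ : Fin r → ℝ),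
      InGLR P ∧ InGLR Q ∧ Antitone μ ∧ P * M * Q⁻¹ = Dmat K μ := by
  obtain ⟨μ, hμ, P, hP, Q, hQ, hPMQ⟩ := exists_integralEquiv_diagonal_single_antitone M hM
  refine ⟨P, Q⁻¹, μ, inGLR_of_mem_integralGL hP, inGLR_of_mem_integralGL (inv_mem_integralGL hQ),
    hμ, ?_⟩
  rw [nonsing_inv_nonsing_inv Q (isUnit_iff_ne_zero.2 (det_ne_zero_of_mem_integralGL hQ))]
  exact hPMQ

/-- Existence of invariant factors: any full-rank `M ∈ M_r(𝓕)` can be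
brought to the form `diag(t^{μ_1}, …, t^{μ_r})` with `μ_1 ≥ … ≥ μ_r` by `P, Q ∈ GL_r(R)`. -/
theorem invariant_partition_exists {r : ℕ} (hr : 1 ≤ r)
    (M : Matrix (Fin r) (Fin r) (HahnSeries ℝ K)) (hM : M.det ≠ 0) :
    ∃ (P Q : Matrix (Fin r) (Fin r) (HahnSeries ℝ K)) (μ : Fin r → ℝ),
      InGLR P ∧ InGLR Q ∧ Antitone μ ∧ P * M * Q⁻¹ = Dmat K μ :=
  invariant_partition_exists_general M hM
end
end

section
/- Let M ∈ M_r(𝓕) be of full rank. If P M Q⁻¹ = diag(t^{μ_1}, …, t^{μ_r}) and P' M Q'⁻¹ = diag(t^{μ'_1}, …, t^{μ'_r}) for P, Q, P', Q' ∈ GL_r(R), where μ_1 ≥ … ≥ μ_r and μ'_1 ≥ … ≥ μ'_r are weakly decreasing real tuples, then μ_i = μ'_i for all 1 ≤ i ≤ r. That is, the invariant partition of M is uniquely determined by M and is an invariant of its GL_r(R)-equivalence orbit. -/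
open Matrix HahnSeries

noncomputable section

variable {K : Type*} [Field K] [CharZero K]

/-!
Over the valuation ring `R`, multiplying a matrix on either side by a matrix with entries in `R`
can only raise the least valuation of its `k × k` minors (expand each minor multilinearly in its
rows). For `D_μ` with `μ` weakly decreasing, the least valuation of a `k × k` minor is the tail sum
`μ_{r-k+1} + ⋯ + μ_r`, attained by the bottom-right principal minor. Applied in both directions
between `D_μ` and `D_μ'`, this makes the tail sums of `μ` and `μ'` agree, and `μ_i` is the
difference of two consecutive tail sums.
-/

open Finset

theorem Antitone.sum_le_sum_of_isUpperSet {α M : Type*} [LinearOrder α] [AddCommMonoid M]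
    [PartialOrder M] [IsOrderedAddMonoid M] {f : α → M} (hf : Antitone f) {s t : Finset α}
    (ht : IsUpperSet (t : Set α)) (hcard : #t = #s) : ∑ x ∈ t, f x ≤ ∑ x ∈ s, f x := by
  classical
  rcases t.eq_empty_or_nonempty with rfl | htne
  · rw [card_empty, eq_comm, card_eq_zero] at hcard
    simp [hcard]
  set y₀ := t.min' htne
  have habove : ∀ y ∈ t \ s, f y ≤ f y₀ := fun y hy => hf (t.min'_le y (mem_sdiff.1 hy).1)
  have hbelow : ∀ x ∈ s \ t, f y₀ ≤ f x := fun x hx =>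
    hf (not_le.1 fun h => (mem_sdiff.1 hx).2 (ht h (t.min'_mem htne))).le
  rw [← sum_inter_add_sum_sdiff t s, ← sum_inter_add_sum_sdiff s t, inter_comm]
  gcongr 1
  calc ∑ x ∈ t \ s, f x ≤ #(t \ s) • f y₀ := sum_le_card_nsmul _ _ _ habove
    _ = #(s \ t) • f y₀ := by rw [card_sdiff_comm hcard]
    _ ≤ ∑ x ∈ s \ t, f x := card_nsmul_le_sum _ _ _ hbelow

namespace Matrix

theorem det_mul_eq_sum_prod_mul_det_submatrix {ι m R : Type*} [Fintype ι] [DecidableEq ι]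
    [Fintype m] [CommRing R] (A : Matrix ι m R) (X : Matrix m ι R) :
    (A * X).det = ∑ f : ι → m, (∏ s, A s (f s)) * (X.submatrix f id).det := by
  have hrows : A * X = fun s => ∑ l, A s l • X l := by
    ext s t
    simp [mul_apply, Finset.sum_apply]
  calc (A * X).det = detRowAlternating fun s => ∑ l, A s l • X l := by rw [hrows]; rfl
    _ = ∑ f : ι → m, detRowAlternating fun s => A s (f s) • X (f s) :=
      (detRowAlternating (R := R) (n := ι)).toMultilinearMap.map_sum _
    _ = ∑ f : ι → m, (∏ s, A s (f s)) * (X.submatrix f id).det := sum_congr rfl fun f _ =>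
      (detRowAlternating (R := R) (n := ι)).toMultilinearMap.map_smul_univ _ _

end Matrix

namespace AddValuation

variable {R Γ₀ : Type*} [CommRing R] [LinearOrderedAddCommMonoidWithTop Γ₀]
  (v : AddValuation R Γ₀)

theorem map_prod {ι : Type*} (s : Finset ι) (f : ι → R) : v (∏ i ∈ s, f i) = ∑ i ∈ s, v (f i) := by
  classical
  induction s using Finset.induction_on with
  | empty => simp
  | insert a s ha ih => rw [prod_insert ha, sum_insert ha, v.map_mul, ih]

theorem map_intCast_units (u : ℤˣ) : v ((u : ℤ) : R) = 0 := by
  rcases Int.units_eq_one_or u with rfl | rfl <;> simp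

theorem sum_le_map_det {n : Type*} [Fintype n] [DecidableEq n] {M : Matrix n n R} {c : n → Γ₀}
    (h : ∀ i j, c j ≤ v (M i j)) : ∑ j, c j ≤ v M.det := by
  rw [Matrix.det_apply']
  refine v.map_le_sum fun σ _ => ?_
  rw [v.map_mul, v.map_intCast_units, zero_add, v.map_prod]
  exact sum_le_sum fun j _ => h (σ j) j

variable {m n : Type*}

def IsMinorLowerBound (ι : Type*) [Fintype ι] [DecidableEq ι] (X : Matrix m n R) (c : Γ₀) :
    Prop :=
  ∀ (I : ι → m) (J : ι → n), c ≤ v (X.submatrix I J).det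

variable {v} {ι : Type*} [Fintype ι] [DecidableEq ι]

theorem IsMinorLowerBound.mul_left {l : Type*} [Fintype m] {A : Matrix l m R}
    {X : Matrix m n R} {c : Γ₀} (hX : v.IsMinorLowerBound ι X c) (hA : ∀ i j, 0 ≤ v (A i j)) :
    v.IsMinorLowerBound ι (A * X) c := by
  intro I J
  rw [Matrix.submatrix_mul A X I id J Function.bijective_id,
    Matrix.det_mul_eq_sum_prod_mul_det_submatrix]
  refine v.map_le_sum fun f _ => ?_
  rw [v.map_mul, v.map_prod]
  exact le_add_of_nonneg_of_le (sum_nonneg fun s _ => hA _ _) (hX f J)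

theorem IsMinorLowerBound.transpose {X : Matrix m n R} {c : Γ₀}
    (hX : v.IsMinorLowerBound ι X c) : v.IsMinorLowerBound ι Xᵀ c := fun I J => by
  rw [← Matrix.transpose_submatrix, Matrix.det_transpose]
  exact hX J I

theorem IsMinorLowerBound.mul_right {o : Type*} [Fintype n] {X : Matrix m n R}
    {B : Matrix n o R} {c : Γ₀} (hX : v.IsMinorLowerBound ι X c) (hB : ∀ i j, 0 ≤ v (B i j)) :
    v.IsMinorLowerBound ι (X * B) c := by
  simpa using (hX.transpose.mul_left (A := Bᵀ) fun i j => hB j i).transpose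

theorem nonneg_map_mul_apply {l : Type*} [Fintype m] {A : Matrix l m R} {B : Matrix m n R}
    (hA : ∀ i j, 0 ≤ v (A i j)) (hB : ∀ i j, 0 ≤ v (B i j)) (i : l) (j : n) :
    0 ≤ v ((A * B) i j) :=
  v.map_le_sum fun k _ => by rw [v.map_mul]; exact add_nonneg (hA i k) (hB k j)

theorem isMinorLowerBound_diagonal [LinearOrder n] {d : n → R} (hd : Antitone (v ∘ d))
    {T : Finset n} (hT : IsUpperSet (T : Set n)) (hcard : #T = Fintype.card ι) :
    v.IsMinorLowerBound ι (Matrix.diagonal d) (∑ x ∈ T, v (d x)) := by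
  intro I J
  by_cases hJ : J.Injective
  · calc ∑ x ∈ T, v (d x) ≤ ∑ x ∈ univ.map ⟨J, hJ⟩, v (d x) :=
          hd.sum_le_sum_of_isUpperSet hT (by simp [hcard])
      _ = ∑ t, v (d (J t)) := sum_map _ _ _
      _ ≤ _ := v.sum_le_map_det fun i j => by
          by_cases hij : I i = J j
          · simp [hij]
          · simp [Matrix.diagonal_apply_ne _ hij]
  · obtain ⟨a, b, hab, hne⟩ := Function.not_injective_iff.1 hJ
    rw [Matrix.det_zero_of_column_eq hne fun i => by simp [hab], v.map_zero]
    exact le_top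

theorem map_det_submatrix_diagonal [DecidableEq n] (d : n → R) (T : Finset n) :
    v ((Matrix.diagonal d).submatrix ((↑) : T → n) (↑)).det = ∑ x ∈ T, v (d x) := by
  rw [Matrix.submatrix_diagonal _ _ Subtype.val_injective, Matrix.det_diagonal, v.map_prod]
  exact sum_coe_sort T fun x => v (d x)

theorem sum_le_sum_of_mul_diagonal_mul_eq [Fintype n] [LinearOrder n] {d d' : n → R}
    (hd : Antitone (v ∘ d)) {A B : Matrix n n R} (hA : ∀ i j, 0 ≤ v (A i j))
    (hB : ∀ i j, 0 ≤ v (B i j)) (h : A * Matrix.diagonal d * B = Matrix.diagonal d')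
    {T : Finset n} (hT : IsUpperSet (T : Set n)) :
    ∑ x ∈ T, v (d x) ≤ ∑ x ∈ T, v (d' x) := by
  have hbound := ((isMinorLowerBound_diagonal (ι := T) hd hT (by simp)).mul_left hA).mul_right
    hB (↑) (↑)
  rwa [h, map_det_submatrix_diagonal] at hbound

end AddValuation

section

variable {K : Type*} [Field K]

theorem inR_iff_nonneg_addVal {a : HahnSeries ℝ K} : inR a ↔ 0 ≤ addVal ℝ K a := by
  rcases eq_or_ne a 0 with rfl | ha
  · simp [inR]
  · simp [inR, ha]

theorem addVal_single_one (a : ℝ) : addVal ℝ K (single a 1) = a := by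
  rw [addVal_apply, orderTop_single one_ne_zero]

namespace InGLR

variable {r : ℕ} {P : Matrix (Fin r) (Fin r) (HahnSeries ℝ K)}

theorem nonneg_addVal (hP : InGLR P) (i j : Fin r) : 0 ≤ addVal ℝ K (P i j) :=
  inR_iff_nonneg_addVal.1 (hP.1 i j)

theorem nonneg_addVal_inv (hP : InGLR P) (i j : Fin r) : 0 ≤ addVal ℝ K (P⁻¹ i j) := by
  obtain ⟨-, N, hN, hPN, -⟩ := hP
  rw [Matrix.inv_eq_right_inv hPN]
  exact inR_iff_nonneg_addVal.1 (hN i j)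

theorem inv_mul_cancel (hP : InGLR P) : P⁻¹ * P = 1 := by
  obtain ⟨-, N, -, hPN, hNP⟩ := hP
  rw [Matrix.inv_eq_right_inv hPN, hNP]

end InGLR

theorem sum_le_sum_of_equiv_Dmat {r : ℕ} {M P Q P' Q' : Matrix (Fin r) (Fin r) (HahnSeries ℝ K)}
    (hP : InGLR P) (hQ : InGLR Q) (hP' : InGLR P') (hQ' : InGLR Q') {μ μ' : Fin r → ℝ}
    (hμ : Antitone μ) (h : P * M * Q⁻¹ = Dmat K μ) (h' : P' * M * Q'⁻¹ = Dmat K μ')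
    {T : Finset (Fin r)} (hT : IsUpperSet (T : Set (Fin r))) :
    ∑ x ∈ T, μ x ≤ ∑ x ∈ T, μ' x := by
  have hM : M = P⁻¹ * Dmat K μ * Q := by
    rw [← h, Matrix.mul_assoc, Matrix.mul_assoc, hQ.inv_mul_cancel, Matrix.mul_one,
      ← Matrix.mul_assoc, hP.inv_mul_cancel, Matrix.one_mul]
  have hequiv : (P' * P⁻¹) * Dmat K μ * (Q * Q'⁻¹) = Dmat K μ' := by
    simp only [← h', hM, Matrix.mul_assoc]
  have hanti : Antitone fun i => addVal ℝ K (single (μ i) (1 : K)) := fun i j hij => by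
    simpa [addVal_single_one] using hμ hij
  have hle := (addVal ℝ K).sum_le_sum_of_mul_diagonal_mul_eq hanti
    (AddValuation.nonneg_map_mul_apply hP'.nonneg_addVal hP.nonneg_addVal_inv)
    (AddValuation.nonneg_map_mul_apply hQ.nonneg_addVal hQ'.nonneg_addVal_inv) hequiv hT
  simpa [addVal_single_one, ← WithTop.coe_sum] using hle

end

theorem invariant_partition_unique_general {r : ℕ}
    (M : Matrix (Fin r) (Fin r) (HahnSeries ℝ K))
    (P Q P' Q' : Matrix (Fin r) (Fin r) (HahnSeries ℝ K))
    (hP : InGLR P) (hQ : InGLR Q) (hP' : InGLR P') (hQ' : InGLR Q')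
    (μ μ' : Fin r → ℝ) (hμ : Antitone μ) (hμ' : Antitone μ')
    (h : P * M * Q⁻¹ = Dmat K μ) (h' : P' * M * Q'⁻¹ = Dmat K μ') :
    ∀ i : Fin r, μ i = μ' i := by
  have htail : ∀ T : Finset (Fin r), IsUpperSet (T : Set (Fin r)) →
      ∑ x ∈ T, μ x = ∑ x ∈ T, μ' x := fun T hT =>
    (sum_le_sum_of_equiv_Dmat hP hQ hP' hQ' hμ h h' hT).antisymm
      (sum_le_sum_of_equiv_Dmat hP' hQ' hP hQ hμ' h' h hT)
  intro i
  have hIci := htail (Ici i) (by simpa using isUpperSet_Ici i)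
  have hIoi := htail (Ioi i) (by simpa using isUpperSet_Ioi i)
  rw [← add_sum_Ioi_eq_sum_Ici, ← add_sum_Ioi_eq_sum_Ici, hIoi] at hIci
  exact add_right_cancel hIci

/-- Uniqueness of the invariant partition. -/
theorem invariant_partition_unique {r : ℕ}
    (M : Matrix (Fin r) (Fin r) (HahnSeries ℝ K)) (hM : M.det ≠ 0)
    (P Q P' Q' : Matrix (Fin r) (Fin r) (HahnSeries ℝ K))
    (hP : InGLR P) (hQ : InGLR Q) (hP' : InGLR P') (hQ' : InGLR Q')
    (μ μ' : Fin r → ℝ) (hμ : Antitone μ) (hμ' : Antitone μ')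
    (h : P * M * Q⁻¹ = Dmat K μ) (h' : P' * M * Q'⁻¹ = Dmat K μ') :
    ∀ i : Fin r, μ i = μ' i :=
  invariant_partition_unique_general M P Q P' Q' hP hQ hP' hQ' μ μ' hμ hμ' h h'
end
end

section
/- Let μ = (μ_1 ≥ … ≥ μ_r) be an ℝ-partition and let S ∈ M_r(𝓕) be of full rank. Then there exists a μ-admissible matrix Q ∈ GL_r(R) such that for all index sets I ⊆ H ⊆ J of equal length k with 1 ≤ k ≤ r, the minors (QS)_{IJ} and (QS)_{HJ} are nonzero and ‖(QS)_{IJ}‖ ≤ ‖(QS)_{HJ}‖ ≤ ‖(QS)_{IJ}‖ + |μ_I| − |μ_H|. -/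
open Matrix HahnSeries

noncomputable section

variable {K : Type*} [Field K] [CharZero K]

/-!
Take `Q = D_μ⁻¹ l D_μ u` with `l` lower and `u` upper triangular matrices over `K`; since `μ`
is antitone, `Q` is `μ`-admissible. By Cauchy–Binet,
`(QS)_{IJ} = ∑_{B, A} t^(|μ_B| - |μ_I|) l_{IB} u_{BA} S_{AJ}`, and triangularity kills every
term unless `B ≤ I` and `B ≤ A`. So `‖(QS)_{IJ}‖ ≥ w(I, J) - |μ_I|`, where `w(I, J)` is the
least `|μ_B| + ‖S_{AJ}‖` over such pairs, with equality unless a polynomial in the entries of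
`l` and `u` vanishes. That polynomial is nonzero (specialise `l, u` to the partial permutation
matrices of an optimal pair), so over the infinite field `K` one choice of `l, u` works for all
minors at once. The two inequalities then say `w(I, J) + |μ_H| ≤ w(H, J) + |μ_I|` (replace an
optimal `B` for `H` by `min B I`) and `w(H, J) ≤ w(I, J)` (every pair for `I` is one for `H`).
-/

open Finset

theorem StrictMono.min {α β : Type*} [Preorder α] [LinearOrder β] {f g : α → β}
    (hf : StrictMono f) (hg : StrictMono g) : StrictMono fun a => min (f a) (g a) :=
  fun _ _ h => lt_min ((min_le_left _ _).trans_lt (hf h)) ((min_le_right _ _).trans_lt (hg h))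

theorem HahnSeries.order_eq_of_coeff {Γ R : Type*} [Zero Γ] [LinearOrder Γ] [Zero R]
    {x : HahnSeries Γ R} {m : Γ} (hm : x.coeff m ≠ 0) (hlt : ∀ y < m, x.coeff y = 0) :
    x ≠ 0 ∧ x.order = m := by
  have hx := ne_zero_of_coeff_ne_zero hm
  exact ⟨hx, le_antisymm (order_le_of_coeff_ne_zero hm) ((le_order_iff_forall hx).2 hlt)⟩

theorem HahnSeries.prod_single_one {Γ R ι : Type*} [AddCommMonoid Γ] [PartialOrder Γ]
    [IsOrderedCancelAddMonoid Γ] [CommSemiring R] (s : Finset ι) (f : ι → Γ) :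
    ∏ i ∈ s, single (f i) (1 : R) = single (∑ i ∈ s, f i) 1 := by
  induction s using Finset.cons_induction with
  | empty => simp
  | cons i s hi ih => rw [prod_cons, sum_cons, ih, single_mul_single, one_mul]

theorem MvPolynomial.exists_forall_eval_ne_zero {σ ι R : Type*} [CommRing R] [IsDomain R]
    [Infinite R] [Finite ι] (p : ι → MvPolynomial σ R) (hp : ∀ i, p i ≠ 0) :
    ∃ x, ∀ i, eval x (p i) ≠ 0 := by
  have := Fintype.ofFinite ι
  by_contra! h
  refine (prod_ne_zero_iff (s := univ)).2 (fun i _ => hp i) (MvPolynomial.funext fun x => ?_)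
  obtain ⟨i, hi⟩ := h x
  rw [map_prod, prod_eq_zero (mem_univ i) hi, map_zero]

section CauchyBinet

variable {R n : Type*} [CommRing R] {k : ℕ}

theorem StrictMono.comp_perm_injective [LinearOrder n] {g g' : Fin k → n}
    {σ σ' : Equiv.Perm (Fin k)} (hg : StrictMono g) (hg' : StrictMono g')
    (h : g ∘ σ = g' ∘ σ') : g = g' ∧ σ = σ' := by
  have hrange : Set.range g = Set.range g' := by
    simpa [Set.range_comp] using congrArg Set.range h
  obtain rfl := (hg.range_inj hg').1 hrange
  exact ⟨rfl, Equiv.ext fun t => hg.injective (congrFun h t)⟩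

theorem Function.Injective.exists_strictMono_comp_perm [LinearOrder n] {p : Fin k → n}
    (hp : Function.Injective p) :
    ∃ g : Fin k → n, StrictMono g ∧ ∃ σ : Equiv.Perm (Fin k), g ∘ σ = p :=
  ⟨p ∘ Tuple.sort p,
    (Tuple.monotone_sort p).strictMono_of_injective (hp.comp (Tuple.sort p).injective),
    (Tuple.sort p)⁻¹, by ext t; simp⟩

theorem Matrix.det_mul_eq_sum_prod_mul_det [Fintype n] (A : Matrix (Fin k) n R)
    (B : Matrix n (Fin k) R) :
    (A * B).det = ∑ p : Fin k → n, (∏ s, A s (p s)) * (B.submatrix p id).det := by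
  calc (A * B).det = Matrix.detRowAlternating (fun s => ∑ j, A s j • B j) := by
        congr 1; ext s t; simp [Matrix.mul_apply]
    _ = ∑ p : Fin k → n, Matrix.detRowAlternating (fun s => A s (p s) • B (p s)) :=
        Matrix.detRowAlternating.toMultilinearMap.map_sum _
    _ = _ := sum_congr rfl fun p _ =>
        Matrix.detRowAlternating.toMultilinearMap.map_smul_univ _ (fun s => B (p s))

theorem Matrix.det_submatrix_id_eq_sum_perm (A : Matrix (Fin k) n R) (g : Fin k → n) :
    (A.submatrix id g).det = ∑ σ : Equiv.Perm (Fin k), (σ.sign : R) * ∏ s, A s (g (σ s)) := by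
  rw [← Matrix.det_transpose, Matrix.det_apply']
  rfl

/-- The Cauchy–Binet formula. -/
theorem Matrix.det_mul_eq_sum_strictMono [Fintype n] [LinearOrder n] (A : Matrix (Fin k) n R)
    (B : Matrix n (Fin k) R) :
    (A * B).det = ∑ g : Fin k → n with StrictMono g,
      (A.submatrix id g).det * (B.submatrix g id).det := by
  have hperm : ∀ g : Fin k → n, (A.submatrix id g).det * (B.submatrix g id).det =
      ∑ σ : Equiv.Perm (Fin k), (∏ s, A s ((g ∘ σ) s)) * (B.submatrix (g ∘ σ) id).det := by
    intro g
    rw [Matrix.det_submatrix_id_eq_sum_perm, sum_mul]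
    refine sum_congr rfl fun σ _ => ?_
    rw [show B.submatrix (g ∘ σ) id = (B.submatrix g id).submatrix σ id from rfl,
      Matrix.det_permute, Function.comp_def]
    ring
  rw [Matrix.det_mul_eq_sum_prod_mul_det, sum_congr rfl fun g _ => hperm g, ← sum_product',
    ← sum_filter_of_ne (p := Function.Injective)]
  · refine (sum_bij (fun q _ => q.1 ∘ q.2) ?_ ?_ ?_ fun _ _ => rfl).symm
    · simp only [mem_product, mem_filter, mem_univ, true_and]
      exact fun q hq => hq.1.injective.comp q.2.injective
    · simp only [mem_product, mem_filter, mem_univ, true_and]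
      intro q hq q' hq' h
      obtain ⟨h1, h2⟩ := hq.1.comp_perm_injective hq'.1 h
      exact Prod.ext h1 h2
    · simp only [mem_product, mem_filter, mem_univ, true_and]
      intro p hp
      obtain ⟨g, hg, σ, rfl⟩ := hp.exists_strictMono_comp_perm
      exact ⟨(g, σ), ⟨hg, trivial⟩, rfl⟩
  · intro p _ hp
    by_contra hinj
    obtain ⟨s, t, hst, hne⟩ := Function.not_injective_iff.1 hinj
    exact hp (by rw [Matrix.det_zero_of_row_eq hne (by ext j; simp [hst]), mul_zero])

end CauchyBinet

section Minors

variable {R n : Type*} [CommRing R] {k : ℕ}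

theorem Matrix.det_submatrix_mul [Fintype n] [LinearOrder n] (M N : Matrix n n R)
    (I J : Fin k → n) :
    ((M * N).submatrix I J).det =
      ∑ g : Fin k → n with StrictMono g, (M.submatrix I g).det * (N.submatrix g J).det := by
  rw [Matrix.submatrix_mul _ _ _ id _ Function.bijective_id, Matrix.det_mul_eq_sum_strictMono]
  rfl

theorem Matrix.det_submatrix_map_mul [Fintype n] [LinearOrder n] {S : Type*} [CommRing S]
    (f : R →+* S) (a : Matrix n n R) (M : Matrix n n S) (I J : Fin k → n) :
    ((a.map f * M).submatrix I J).det =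
      ∑ g : Fin k → n with StrictMono g, f (a.submatrix I g).det * (M.submatrix g J).det := by
  simp only [Matrix.det_submatrix_mul, RingHom.map_det]
  rfl

theorem Matrix.det_submatrix_diagonal_mul [Fintype n] [DecidableEq n] (d : n → R)
    (M : Matrix n n R) (I J : Fin k → n) :
    ((diagonal d * M).submatrix I J).det = (∏ s, d (I s)) * (M.submatrix I J).det := by
  rw [show (diagonal d * M).submatrix I J = diagonal (d ∘ I) * M.submatrix I J by
    ext; simp [diagonal_mul], det_mul, det_diagonal]
  rfl

theorem Matrix.det_submatrix_eq_one_or_zero [LinearOrder n] {m : Type*} {M : Matrix m n R}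
    {I : Fin k → m} {B₀ B : Fin k → n} (hI : Function.Injective I) (hB₀ : StrictMono B₀)
    (hB : StrictMono B) (hsupp : ∀ i j, M i j ≠ 0 → ∃ s, I s = i ∧ B₀ s = j)
    (hone : ∀ s, M (I s) (B₀ s) = 1) :
    (M.submatrix I B).det = if B = B₀ then 1 else 0 := by
  split_ifs with hBB₀
  · subst hBB₀
    rw [show M.submatrix I B = 1 from ?_, det_one]
    ext s t
    by_cases hst : s = t
    · subst hst; simp [hone]
    · rw [submatrix_apply, one_apply_ne hst]
      by_contra h
      obtain ⟨s', hs', ht'⟩ := hsupp _ _ h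
      exact hst ((hI hs').symm.trans (hB.injective ht'))
  · have : ¬ Set.range B ⊆ Set.range B₀ := fun h => hBB₀ <| (hB.range_inj hB₀).1 <|
      Set.eq_of_subset_of_ncard_le h (by rw [Set.ncard_range_of_injective hB.injective,
        Set.ncard_range_of_injective hB₀.injective]) (Set.finite_range _)
    obtain ⟨_, ⟨t, rfl⟩, ht⟩ := Set.not_subset.1 this
    refine det_eq_zero_of_column_eq_zero t fun s => ?_
    by_contra h
    obtain ⟨s', -, hs'⟩ := hsupp _ _ h
    exact ht ⟨s', hs'⟩

end Minors

section TriangularMinors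

variable {R n : Type*} [CommRing R] [LinearOrder n] {k : ℕ}

theorem Equiv.Perm.exists_le_apply_le (σ : Equiv.Perm (Fin k)) (s : Fin k) :
    ∃ t, s ≤ t ∧ σ t ≤ s := by
  by_contra! h
  have hcard := card_le_card_of_injOn σ (fun t ht => mem_Ioi.2 (h t (mem_Ici.1 ht)))
    σ.injective.injOn
  rw [Fin.card_Ici, Fin.card_Ioi] at hcard
  omega

theorem Matrix.IsLowerTriangular.le_of_det_submatrix_ne_zero {M : Matrix n n R}
    (hM : M.IsLowerTriangular) {I B : Fin k → n} (hI : Monotone I) (hB : Monotone B)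
    (h : (M.submatrix I B).det ≠ 0) (s : Fin k) : B s ≤ I s := by
  by_contra! hs
  refine h ((det_apply' _).trans (sum_eq_zero fun σ _ => ?_))
  obtain ⟨t, hst, hσt⟩ := σ.exists_le_apply_le s
  exact mul_eq_zero_of_right _ (prod_eq_zero (mem_univ t)
    (hM ((hI hσt).trans_lt (hs.trans_le (hB hst)))))

theorem Matrix.IsUpperTriangular.le_of_det_submatrix_ne_zero {M : Matrix n n R}
    (hM : M.IsUpperTriangular) {B A : Fin k → n} (hB : Monotone B) (hA : Monotone A)
    (h : (M.submatrix B A).det ≠ 0) (s : Fin k) : B s ≤ A s := by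
  rw [← Matrix.det_transpose, Matrix.transpose_submatrix] at h
  exact Matrix.IsLowerTriangular.le_of_det_submatrix_ne_zero hM.transpose hA hB h s

end TriangularMinors

section ValuationRing

variable {F : Type*} [Field F] {r : ℕ}

theorem inR_iff_zero_le_addVal {a : HahnSeries ℝ F} : inR a ↔ 0 ≤ addVal ℝ F a := by
  rw [addVal_apply, zero_le_orderTop_iff]
  exact ⟨fun h => h.elim (fun h => h ▸ order_zero.ge) id, Or.inr⟩

variable (F) in
def valuationRing : Subring (HahnSeries ℝ F) where
  carrier := {a | inR a}
  mul_mem' {a b} ha hb := by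
    simp only [Set.mem_ofPred_eq, inR_iff_zero_le_addVal, AddValuation.map_mul] at *
    exact add_nonneg ha hb
  one_mem' := by simp [inR_iff_zero_le_addVal]
  add_mem' {a b} ha hb := by
    simp only [Set.mem_ofPred_eq, inR_iff_zero_le_addVal] at *
    exact (le_min ha hb).trans (AddValuation.map_add _ a b)
  zero_mem' := Or.inl rfl
  neg_mem' := by simp [inR_iff_zero_le_addVal]

theorem mem_valuationRing {a : HahnSeries ℝ F} : a ∈ valuationRing F ↔ inR a := Iff.rfl

theorem inR_single {e : ℝ} (he : 0 ≤ e) (c : F) : inR (single e c) := by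
  by_cases hc : c = 0
  · exact Or.inl (by simp [hc])
  · exact Or.inr (by rwa [order_single hc])

theorem inR_mul_apply {A B : Matrix (Fin r) (Fin r) (HahnSeries ℝ F)} (hA : ∀ i j, inR (A i j))
    (hB : ∀ i j, inR (B i j)) (i j : Fin r) : inR ((A * B) i j) := by
  rw [← mem_valuationRing, Matrix.mul_apply]
  exact (valuationRing F).sum_mem fun x _ => (valuationRing F).mul_mem (hA i x) (hB x j)

theorem inGLR_of_mul_eq_one {A B : Matrix (Fin r) (Fin r) (HahnSeries ℝ F)}
    (hA : ∀ i j, inR (A i j)) (hB : ∀ i j, inR (B i j)) (h : A * B = 1) : InGLR A :=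
  ⟨hA, B, hB, h, mul_eq_one_comm.1 h⟩

theorem InGLR.mul {A B : Matrix (Fin r) (Fin r) (HahnSeries ℝ F)} (hA : InGLR A)
    (hB : InGLR B) : InGLR (A * B) := by
  obtain ⟨hA, A', hA', hAA', -⟩ := hA
  obtain ⟨hB, B', hB', hBB', -⟩ := hB
  refine inGLR_of_mul_eq_one (inR_mul_apply hA hB) (inR_mul_apply hB' hA') ?_
  rw [Matrix.mul_assoc, ← Matrix.mul_assoc B, hBB', Matrix.one_mul, hAA']

end ValuationRing

section DiagonalConjugation

variable {F : Type*} [Field F] {r : ℕ}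

theorem Dmat_add (μ ν : Fin r → ℝ) : Dmat F (μ + ν) = Dmat F μ * Dmat F ν := by
  simp [Dmat, single_mul_single]

theorem Dmat_zero : Dmat F (0 : Fin r → ℝ) = 1 := by
  simp [Dmat]

theorem Dmat_mul_Dmat_neg (μ : Fin r → ℝ) : Dmat F μ * Dmat F (-μ) = 1 := by
  rw [← Dmat_add, add_neg_cancel, Dmat_zero]

theorem inv_Dmat (μ : Fin r → ℝ) : (Dmat F μ)⁻¹ = Dmat F (-μ) :=
  Matrix.inv_eq_right_inv (Dmat_mul_Dmat_neg μ)

def conjDmat (α : Fin r → ℝ) (a : Matrix (Fin r) (Fin r) F) :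
    Matrix (Fin r) (Fin r) (HahnSeries ℝ F) :=
  Dmat F (-α) * a.map C * Dmat F α

theorem conjDmat_apply (α : Fin r → ℝ) (a : Matrix (Fin r) (Fin r) F) (i j : Fin r) :
    conjDmat α a i j = single (α j - α i) (a i j) := by
  simp [conjDmat, Dmat, single_mul_single, neg_add_eq_sub]

theorem conjDmat_zero (a : Matrix (Fin r) (Fin r) F) : conjDmat 0 a = a.map C := by
  rw [conjDmat, neg_zero, Dmat_zero, Matrix.one_mul, Matrix.mul_one]

theorem conjDmat_mul (α : Fin r → ℝ) (a b : Matrix (Fin r) (Fin r) F) :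
    conjDmat α a * conjDmat α b = conjDmat α (a * b) := by
  simp only [conjDmat, Matrix.map_mul, Matrix.mul_assoc]
  rw [← Matrix.mul_assoc (Dmat F α), Dmat_mul_Dmat_neg, Matrix.one_mul]

theorem conjDmat_one (α : Fin r → ℝ) : conjDmat α (1 : Matrix (Fin r) (Fin r) F) = 1 := by
  rw [conjDmat, Matrix.map_one _ (map_zero C) (map_one C), Matrix.mul_one, ← Dmat_add,
    neg_add_cancel, Dmat_zero]

theorem inR_conjDmat_apply {α : Fin r → ℝ} {a : Matrix (Fin r) (Fin r) F}
    (ha : a.BlockTriangular α) (i j : Fin r) : inR (conjDmat α a i j) := by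
  rw [conjDmat_apply]
  by_cases hij : a i j = 0
  · exact Or.inl (by rw [hij, single_eq_zero])
  · exact inR_single (sub_nonneg.2 (not_lt.1 fun h => hij (ha h))) _

theorem inGLR_conjDmat {α : Fin r → ℝ} {a : Matrix (Fin r) (Fin r) F}
    (ha : a.BlockTriangular α) (hdet : a.det ≠ 0) : InGLR (conjDmat α a) := by
  have := a.invertibleOfIsUnitDet (isUnit_iff_ne_zero.2 hdet)
  refine inGLR_of_mul_eq_one (inR_conjDmat_apply ha)
    (inR_conjDmat_apply (Matrix.blockTriangular_inv_of_blockTriangular ha)) ?_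
  rw [conjDmat_mul, Matrix.mul_inv_of_invertible, conjDmat_one]

theorem inGLR_map_C {a : Matrix (Fin r) (Fin r) F} (hdet : a.det ≠ 0) : InGLR (a.map C) :=
  conjDmat_zero a ▸ inGLR_conjDmat (fun _ _ h => (lt_irrefl _ h).elim) hdet

/-- The entries of `D_μ⁻¹ l D_μ` and `D_μ u D_μ⁻¹` are `l_ij t^(μ_j - μ_i)` with `j ≤ i` and
`u_ij t^(μ_i - μ_j)` with `i ≤ j`, integral because `μ` is antitone. -/
theorem muAdmissible_conjDmat_mul {μ : Fin r → ℝ} (hμ : Antitone μ)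
    {l u : Matrix (Fin r) (Fin r) F} (hl : l.IsLowerTriangular) (hu : u.IsUpperTriangular)
    (hl₀ : l.det ≠ 0) (hu₀ : u.det ≠ 0) : MuAdmissible μ (conjDmat μ l * u.map C) := by
  have hlμ : l.BlockTriangular μ := fun _ _ h => hl (hμ.reflect_lt h)
  have huμ : u.BlockTriangular (-μ) := fun _ _ h => hu (hμ.reflect_lt (neg_lt_neg_iff.1 h))
  have hconj : Dmat F μ * (conjDmat μ l * u.map C) * (Dmat F μ)⁻¹ =
      l.map C * conjDmat (-μ) u := by
    simp only [conjDmat, inv_Dmat, neg_neg, Matrix.mul_assoc]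
    rw [← Matrix.mul_assoc (Dmat F μ), Dmat_mul_Dmat_neg, Matrix.one_mul]
  refine ⟨(inGLR_conjDmat hlμ hl₀).mul (inGLR_map_C hu₀), ?_⟩
  rw [hconj]
  exact (inGLR_map_C hl₀).mul (inGLR_conjDmat huμ hu₀)

end DiagonalConjugation

section MinorExpansion

variable {F : Type*} [Field F] {r k : ℕ}

theorem minorDet_conjDmat_mul_map_C_mul (μ : Fin r → ℝ) (l u : Matrix (Fin r) (Fin r) F)
    (S : Matrix (Fin r) (Fin r) (HahnSeries ℝ F)) (I J : Fin k → Fin r) :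
    minorDet (conjDmat μ l * u.map C * S) I J =
      ∑ B : Fin k → Fin r with StrictMono B, ∑ A : Fin k → Fin r with StrictMono A,
        single (∑ s, μ (B s) - ∑ s, μ (I s)) ((l.submatrix I B).det * (u.submatrix B A).det) *
          (S.submatrix A J).det := by
  simp only [minorDet, conjDmat, Dmat, Matrix.mul_assoc]
  rw [Matrix.det_submatrix_diagonal_mul, Matrix.det_submatrix_map_mul, mul_sum]
  refine sum_congr rfl fun B _ => ?_
  rw [Matrix.det_submatrix_diagonal_mul, Matrix.det_submatrix_map_mul]
  simp only [mul_sum]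
  refine sum_congr rfl fun A _ => ?_
  simp only [prod_single_one, Pi.neg_apply, sum_neg_distrib, C_apply, ← mul_assoc,
    single_mul_single, zero_add, add_zero, one_mul, neg_add_eq_sub]

theorem coeff_minorDet_conjDmat_mul_map_C_mul (μ : Fin r → ℝ) (l u : Matrix (Fin r) (Fin r) F)
    (S : Matrix (Fin r) (Fin r) (HahnSeries ℝ F)) (I J : Fin k → Fin r) (x : ℝ) :
    (minorDet (conjDmat μ l * u.map C * S) I J).coeff x =
      ∑ B : Fin k → Fin r with StrictMono B, ∑ A : Fin k → Fin r with StrictMono A,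
        (l.submatrix I B).det * (u.submatrix B A).det *
          (S.submatrix A J).det.coeff (x + ∑ s, μ (I s) - ∑ s, μ (B s)) := by
  simp only [minorDet_conjDmat_mul_map_C_mul, coeff_sum, coeff_single_mul]
  refine sum_congr rfl fun B _ => sum_congr rfl fun A _ => ?_
  rw [sub_sub_eq_add_sub]

end MinorExpansion

section MinimalWeight

variable {F : Type*} [Field F] {r k : ℕ} (S : Matrix (Fin r) (Fin r) (HahnSeries ℝ F))
  (μ : Fin r → ℝ)

open scoped Classical in
/-- The pairs `(B, A)` with `B ≤ I`, `B ≤ A` and `S_{AJ} ≠ 0`: those that can contribute to the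
minor `(QS)_{IJ}` when `Q = D_μ⁻¹ l D_μ u` with `l` lower and `u` upper triangular. -/
def supportPairs (I J : Fin k → Fin r) : Finset ((Fin k → Fin r) × (Fin k → Fin r)) :=
  {q | StrictMono q.1 ∧ StrictMono q.2 ∧ (∀ s, q.1 s ≤ I s) ∧ (∀ s, q.1 s ≤ q.2 s) ∧
    (S.submatrix q.2 J).det ≠ 0}

theorem mem_supportPairs {I J B A : Fin k → Fin r} :
    (B, A) ∈ supportPairs S I J ↔ StrictMono B ∧ StrictMono A ∧ (∀ s, B s ≤ I s) ∧
      (∀ s, B s ≤ A s) ∧ (S.submatrix A J).det ≠ 0 := by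
  simp [supportPairs]

def pairWeight (J : Fin k → Fin r) (q : (Fin k → Fin r) × (Fin k → Fin r)) : ℝ :=
  ∑ s, μ (q.1 s) + (S.submatrix q.2 J).det.order

/-- `‖(QS)_{IJ}‖ + |μ_I|` for generic `Q`; the value `0` when there are no support pairs is
junk. -/
def minWeight (I J : Fin k → Fin r) : ℝ :=
  if h : (supportPairs S I J).Nonempty then (supportPairs S I J).inf' h (pairWeight S μ J)
  else 0

variable {S μ}

theorem minWeight_le {I J B A : Fin k → Fin r} (h : (B, A) ∈ supportPairs S I J) :
    minWeight S μ I J ≤ ∑ s, μ (B s) + (S.submatrix A J).det.order := by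
  rw [minWeight, dif_pos ⟨_, h⟩]
  exact inf'_le _ h

theorem exists_minWeight_eq {I J : Fin k → Fin r} (h : (supportPairs S I J).Nonempty) :
    ∃ B A, (B, A) ∈ supportPairs S I J ∧
      minWeight S μ I J = ∑ s, μ (B s) + (S.submatrix A J).det.order := by
  obtain ⟨⟨B, A⟩, hq, heq⟩ := exists_mem_eq_inf' h (pairWeight S μ J)
  exact ⟨B, A, hq, by rw [minWeight, dif_pos h, heq, pairWeight]⟩

theorem supportPairs_nonempty (hS : S.det ≠ 0) {I J : Fin k → Fin r} (hI : StrictMono I)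
    (hJ : StrictMono J) : (supportPairs S I J).Nonempty := by
  have hone : ((S⁻¹ * S).submatrix J J).det = 1 := by
    rw [Matrix.nonsing_inv_mul S (isUnit_iff_ne_zero.2 hS), submatrix_one _ hJ.injective, det_one]
  rw [Matrix.det_submatrix_mul] at hone
  obtain ⟨A, hA, hSA⟩ := exists_ne_zero_of_sum_ne_zero (hone.trans_ne one_ne_zero)
  rw [mem_filter] at hA
  exact ⟨(fun s => min (I s) (A s), A), (mem_supportPairs S).2 ⟨hI.min hA.2, hA.2,
    fun s => min_le_left _ _, fun s => min_le_right _ _, right_ne_zero_of_mul hSA⟩⟩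

theorem minWeight_anti {I H J : Fin k → Fin r} (hIH : ∀ s, I s ≤ H s)
    (h : (supportPairs S I J).Nonempty) : minWeight S μ H J ≤ minWeight S μ I J := by
  obtain ⟨B, A, hq, heq⟩ := exists_minWeight_eq (μ := μ) h
  obtain ⟨hB, hA, hBI, hBA, hSA⟩ := (mem_supportPairs S).1 hq
  exact heq ▸ minWeight_le ((mem_supportPairs S).2
    ⟨hB, hA, fun s => (hBI s).trans (hIH s), hBA, hSA⟩)

theorem minWeight_add_le (hμ : Antitone μ) {I H J : Fin k → Fin r} (hI : StrictMono I)
    (hIH : ∀ s, I s ≤ H s) (h : (supportPairs S H J).Nonempty) :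
    minWeight S μ I J + ∑ s, μ (H s) ≤ minWeight S μ H J + ∑ s, μ (I s) := by
  obtain ⟨B, A, hq, heq⟩ := exists_minWeight_eq (μ := μ) h
  obtain ⟨hB, hA, hBH, hBA, hSA⟩ := (mem_supportPairs S).1 hq
  have hle := minWeight_le (μ := μ) ((mem_supportPairs S).2 ⟨hB.min hI, hA,
    fun s => min_le_right _ _, fun s => (min_le_left _ _).trans (hBA s), hSA⟩)
  have hsum : ∑ s, μ (min (B s) (I s)) + ∑ s, μ (H s) ≤ ∑ s, μ (B s) + ∑ s, μ (I s) := by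
    simp only [← sum_add_distrib]
    refine sum_le_sum fun s _ => ?_
    rcases le_total (B s) (I s) with hs | hs
    · rw [min_eq_left hs]; linarith [hμ (hIH s)]
    · rw [min_eq_right hs]; linarith [hμ (hBH s)]
  linarith

end MinimalWeight

section TriangularOfEntries

variable {E : Type*} [CommRing E] {r : ℕ}

def lowerOf (v : Fin r × Fin r → E) : Matrix (Fin r) (Fin r) E :=
  of fun i j => if j ≤ i then v (i, j) else 0

def upperOf (v : Fin r × Fin r → E) : Matrix (Fin r) (Fin r) E :=
  of fun i j => if i ≤ j then v (i, j) else 0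

theorem lowerOf_isLowerTriangular (v : Fin r × Fin r → E) : (lowerOf v).IsLowerTriangular :=
  fun _ _ h => if_neg (not_le.2 h)

theorem upperOf_isUpperTriangular (v : Fin r × Fin r → E) : (upperOf v).IsUpperTriangular :=
  fun _ _ h => if_neg (not_le.2 h)

theorem det_lowerOf (v : Fin r × Fin r → E) : (lowerOf v).det = ∏ i, v (i, i) := by
  rw [det_of_isLowerTriangular _ (lowerOf_isLowerTriangular v)]
  simp [lowerOf]

theorem det_upperOf (v : Fin r × Fin r → E) : (upperOf v).det = ∏ i, v (i, i) := by
  rw [det_of_isUpperTriangular (upperOf_isUpperTriangular v)]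
  simp [upperOf]

theorem map_lowerOf {E' : Type*} [CommRing E'] {f : E → E'} (hf : f 0 = 0)
    (v : Fin r × Fin r → E) : (lowerOf v).map f = lowerOf (f ∘ v) := by
  ext i j; simp [lowerOf, apply_ite f, hf]

theorem map_upperOf {E' : Type*} [CommRing E'] {f : E → E'} (hf : f 0 = 0)
    (v : Fin r × Fin r → E) : (upperOf v).map f = upperOf (f ∘ v) := by
  ext i j; simp [upperOf, apply_ite f, hf]

end TriangularOfEntries

section GenericTriangular

variable (E : Type*) [CommRing E] (r : ℕ)

/-- `Sum.inl (i, j)` is the indeterminate for the entry `l_ij` of the generic lower triangular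
matrix, `Sum.inr (i, j)` the one for the entry `u_ij` of the generic upper triangular one. -/
abbrev TriangularVars := (Fin r × Fin r) ⊕ (Fin r × Fin r)

def genericLower : Matrix (Fin r) (Fin r) (MvPolynomial (TriangularVars r) E) :=
  lowerOf (MvPolynomial.X ∘ Sum.inl)

def genericUpper : Matrix (Fin r) (Fin r) (MvPolynomial (TriangularVars r) E) :=
  upperOf (MvPolynomial.X ∘ Sum.inr)

variable {E r}

theorem det_genericLower_mul_det_genericUpper_ne_zero [IsDomain E] :
    (genericLower E r).det * (genericUpper E r).det ≠ 0 := by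
  simp [genericLower, genericUpper, det_lowerOf, det_upperOf, prod_ne_zero_iff,
    MvPolynomial.X_ne_zero]

theorem map_aeval_genericLower (x : TriangularVars r → E) :
    (genericLower E r).map (MvPolynomial.aeval x) = lowerOf (x ∘ Sum.inl) := by
  rw [genericLower, map_lowerOf (map_zero _)]
  exact congrArg lowerOf (funext fun _ => MvPolynomial.aeval_X _ _)

theorem map_aeval_genericUpper (x : TriangularVars r → E) :
    (genericUpper E r).map (MvPolynomial.aeval x) = upperOf (x ∘ Sum.inr) := by
  rw [genericUpper, map_upperOf (map_zero _)]
  exact congrArg upperOf (funext fun _ => MvPolynomial.aeval_X _ _)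

end GenericTriangular

section LeadingForm

variable {F : Type*} [Field F] {r k : ℕ} (S : Matrix (Fin r) (Fin r) (HahnSeries ℝ F))
  (μ : Fin r → ℝ)

/-- For `E = F` this is the coefficient of `t ^ (minWeight S μ I J - |μ_I|)` in
`(D_μ⁻¹ l D_μ u S)_{IJ}`; for `E` a polynomial ring it is that coefficient as a polynomial in
the entries of `l` and `u`. -/
def leadingForm {E : Type*} [CommRing E] [Algebra F E] (I J : Fin k → Fin r)
    (l u : Matrix (Fin r) (Fin r) E) : E :=
  ∑ B : Fin k → Fin r with StrictMono B, ∑ A : Fin k → Fin r with StrictMono A,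
    (l.submatrix I B).det * (u.submatrix B A).det *
      algebraMap F E ((S.submatrix A J).det.coeff (minWeight S μ I J - ∑ s, μ (B s)))

theorem map_leadingForm {E E' : Type*} [CommRing E] [CommRing E'] [Algebra F E] [Algebra F E']
    (f : E →ₐ[F] E') (I J : Fin k → Fin r) (l u : Matrix (Fin r) (Fin r) E) :
    f (leadingForm S μ I J l u) = leadingForm S μ I J (l.map f) (u.map f) := by
  simp only [leadingForm, map_sum, map_mul, AlgHom.commutes, AlgHom.map_det]
  rfl

variable {S μ}

theorem order_minorDet_conjDmat_mul_map_C_mul {l u : Matrix (Fin r) (Fin r) F}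
    (hl : l.IsLowerTriangular) (hu : u.IsUpperTriangular) {I J : Fin k → Fin r}
    (hI : StrictMono I) (hV : leadingForm S μ I J l u ≠ 0) :
    minorDet (conjDmat μ l * u.map C * S) I J ≠ 0 ∧
      (minorDet (conjDmat μ l * u.map C * S) I J).order = minWeight S μ I J - ∑ s, μ (I s) := by
  refine order_eq_of_coeff ?_ fun x hx => ?_
  · simpa [coeff_minorDet_conjDmat_mul_map_C_mul, leadingForm] using hV
  rw [coeff_minorDet_conjDmat_mul_map_C_mul]
  refine sum_eq_zero fun B hB => sum_eq_zero fun A hA => ?_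
  rw [mem_filter] at hB hA
  by_cases hlB : (l.submatrix I B).det = 0
  · simp [hlB]
  by_cases huBA : (u.submatrix B A).det = 0
  · simp [huBA]
  by_cases hSA : (S.submatrix A J).det = 0
  · simp [hSA]
  have hle := minWeight_le (μ := μ) ((mem_supportPairs S).2 ⟨hB.2, hA.2,
    hl.le_of_det_submatrix_ne_zero hI.monotone hB.2.monotone hlB,
    hu.le_of_det_submatrix_ne_zero hB.2.monotone hA.2.monotone huBA, hSA⟩)
  rw [coeff_eq_zero_of_lt_order (by linarith), mul_zero]

/-- The optimal pair `(B₀, A₀)` is isolated by specialising `l` and `u` to the partial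
permutation matrices of `B₀ ↦ I` and `A₀ ↦ B₀`. -/
theorem leadingForm_generic_ne_zero {I J : Fin k → Fin r} (hI : StrictMono I)
    (h : (supportPairs S I J).Nonempty) :
    leadingForm S μ I J (genericLower F r) (genericUpper F r) ≠ 0 := by
  obtain ⟨B₀, A₀, hq, heq⟩ := exists_minWeight_eq (μ := μ) h
  obtain ⟨hB₀, hA₀, hB₀I, hB₀A₀, hSA₀⟩ := (mem_supportPairs S).1 hq
  let x₀ : TriangularVars r → F := Sum.elim (Set.indicator (Set.range fun s => (I s, B₀ s)) 1)
    (Set.indicator (Set.range fun s => (B₀ s, A₀ s)) 1)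
  have hl₀ : ∀ B, StrictMono B →
      ((lowerOf (x₀ ∘ Sum.inl)).submatrix I B).det = if B = B₀ then 1 else 0 := fun B hB =>
    det_submatrix_eq_one_or_zero hI.injective hB₀ hB
      (fun i j h => (by simpa [x₀, lowerOf] using h : j ≤ i ∧ _).2)
      (fun s => by simp [x₀, lowerOf, hB₀I s, Set.indicator_of_mem (Set.mem_range_self s)])
  have hu₀ : ∀ A, StrictMono A →
      ((upperOf (x₀ ∘ Sum.inr)).submatrix B₀ A).det = if A = A₀ then 1 else 0 := fun A hA =>
    det_submatrix_eq_one_or_zero hB₀.injective hA₀ hA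
      (fun i j h => (by simpa [x₀, upperOf] using h : i ≤ j ∧ _).2)
      (fun s => by simp [x₀, upperOf, hB₀A₀ s, Set.indicator_of_mem (Set.mem_range_self s)])
  have hx₀ : leadingForm S μ I J (lowerOf (x₀ ∘ Sum.inl)) (upperOf (x₀ ∘ Sum.inr)) =
      (S.submatrix A₀ J).det.coeff (S.submatrix A₀ J).det.order := by
    rw [leadingForm, sum_eq_single_of_mem B₀ (by simpa using hB₀) fun B hB hne =>
      sum_eq_zero fun A _ => by rw [hl₀ B (mem_filter.1 hB).2, if_neg hne, zero_mul, zero_mul],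
      sum_eq_single_of_mem A₀ (by simpa using hA₀) fun A hA hne => by
        rw [hu₀ A (mem_filter.1 hA).2, if_neg hne, mul_zero, zero_mul],
      hl₀ B₀ hB₀, hu₀ A₀ hA₀, if_pos rfl, if_pos rfl, heq, add_sub_cancel_left, one_mul,
      one_mul, Algebra.algebraMap_self, RingHom.id_apply]
  intro h0
  have h1 := congrArg (MvPolynomial.aeval x₀) h0
  rw [map_leadingForm, map_zero, map_aeval_genericLower, map_aeval_genericUpper, hx₀] at h1
  exact hSA₀ (coeff_order_eq_zero.1 h1)

end LeadingForm

section GenericPoint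

variable {F : Type*} [Field F] [Infinite F] {r : ℕ}

theorem exists_generic_triangular {S : Matrix (Fin r) (Fin r) (HahnSeries ℝ F)} (hS : S.det ≠ 0)
    (μ : Fin r → ℝ) :
    ∃ x : TriangularVars r → F, (lowerOf (x ∘ Sum.inl)).det ≠ 0 ∧
      (upperOf (x ∘ Sum.inr)).det ≠ 0 ∧
      ∀ {k : ℕ} {I J : Fin k → Fin r}, StrictMono I → StrictMono J →
        leadingForm S μ I J (lowerOf (x ∘ Sum.inl)) (upperOf (x ∘ Sum.inr)) ≠ 0 := by
  let p : Option (Σ k : Fin (r + 1),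
      {q : (Fin k → Fin r) × (Fin k → Fin r) // StrictMono q.1 ∧ StrictMono q.2}) →
      MvPolynomial (TriangularVars r) F :=
    fun o => o.elim ((genericLower F r).det * (genericUpper F r).det)
      fun q => leadingForm S μ q.2.1.1 q.2.1.2 (genericLower F r) (genericUpper F r)
  have hp : ∀ o, p o ≠ 0 := by
    rintro (_ | ⟨k, ⟨I, J⟩, hI, hJ⟩)
    · exact det_genericLower_mul_det_genericUpper_ne_zero
    · exact leadingForm_generic_ne_zero hI (supportPairs_nonempty hS hI hJ)
  obtain ⟨x, hx⟩ := MvPolynomial.exists_forall_eval_ne_zero p hp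
  have hdet := hx none
  rw [← MvPolynomial.aeval_eq_eval] at hdet
  simp only [p, Option.elim, map_mul, AlgHom.map_det, AlgHom.mapMatrix_apply,
    map_aeval_genericLower, map_aeval_genericUpper] at hdet
  refine ⟨x, left_ne_zero_of_mul hdet, right_ne_zero_of_mul hdet, fun {k} I J hI hJ => ?_⟩
  have hk : k < r + 1 := Nat.lt_succ_of_le (Fin.le_of_injective J hJ.injective)
  have hIJ := hx (some ⟨⟨k, hk⟩, ⟨(I, J), hI, hJ⟩⟩)
  rwa [← MvPolynomial.aeval_eq_eval,
    show p _ = leadingForm S μ I J (genericLower F r) (genericUpper F r) from rfl,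
    map_leadingForm, map_aeval_genericLower, map_aeval_genericUpper] at hIJ

end GenericPoint

/-- Existence of a generic `μ`-admissible left factor `Q`: for all index
sets `I ⊆ H ⊆ J` of equal length `k`, `1 ≤ k ≤ r`, the minors `(QS)_{IJ}, (QS)_{HJ}` are
nonzero and `‖(QS)_{IJ}‖ ≤ ‖(QS)_{HJ}‖ ≤ ‖(QS)_{IJ}‖ + |μ_I| − |μ_H|`. -/
theorem generic_row_factor {r : ℕ} (μ : Fin r → ℝ) (hμ : Antitone μ)
    (S : Matrix (Fin r) (Fin r) (HahnSeries ℝ K)) (hS : S.det ≠ 0) :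
    ∃ Q : Matrix (Fin r) (Fin r) (HahnSeries ℝ K), MuAdmissible μ Q ∧
      ∀ (k : ℕ), 1 ≤ k → k ≤ r → ∀ (I H J : Fin k → Fin r),
        StrictMono I → StrictMono H → StrictMono J →
        (∀ s, I s ≤ H s) → (∀ s, H s ≤ J s) →
        minorDet (Q * S) I J ≠ 0 ∧ minorDet (Q * S) H J ≠ 0 ∧
        (minorDet (Q * S) I J).order ≤ (minorDet (Q * S) H J).order ∧
        (minorDet (Q * S) H J).order ≤
          (minorDet (Q * S) I J).order + (∑ s, μ (I s)) - ∑ s, μ (H s) := by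
  obtain ⟨x, hl, hu, hgeneric⟩ := exists_generic_triangular hS μ
  have hlow := lowerOf_isLowerTriangular (x ∘ Sum.inl)
  have hupp := upperOf_isUpperTriangular (x ∘ Sum.inr)
  refine ⟨_, muAdmissible_conjDmat_mul hμ hlow hupp hl hu, ?_⟩
  intro k _ _ I H J hI hH hJ hIH _
  obtain ⟨hI₀, hIord⟩ := order_minorDet_conjDmat_mul_map_C_mul hlow hupp hI (hgeneric hI hJ)
  obtain ⟨hH₀, hHord⟩ := order_minorDet_conjDmat_mul_map_C_mul hlow hupp hH (hgeneric hH hJ)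
  have hanti := minWeight_anti (μ := μ) hIH (supportPairs_nonempty hS hI hJ)
  have hadd := minWeight_add_le hμ hI hIH (supportPairs_nonempty hS hH hJ)
  refine ⟨hI₀, hH₀, ?_, ?_⟩ <;> linarith

end
end
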